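/- The generating function 𝐂(u) = 1 + ∑_{r≥1} 𝒞(r)·u^r of the generalized Catalan polynomials satisfies the functional equation (𝐂(u) - 1)/u - z·𝐂(u) = (1-z)·𝐂(u)², i.e. 𝐂(u) - 1 - z·u·𝐂(u) = (1-z)·u·𝐂(u)² as formal power series in u. -/

import Mathlib

/-!
Expanding `(1 - z u)^{-(2m+1)}` gives `∑_r C(r+m, 2m) z^{r-m} uʳ = uᵐ / (1 - z u)^{2m+1}`, so
`𝐂(u) = c(t) / (1 - z u)` with `t = (1 - z) u / (1 - z u)²` and `c(t) = ∑ Cat(m) tᵐ` the Catalan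
series. Substituting `t` into `c = 1 + t c²` and multiplying by `1 - z u` gives the equation.
-/

open Finset Polynomial PowerSeries

/-- The generalized Catalan polynomial
`𝒞(r) = ∑_{m=0}^{r} z^{r-m}(1-z)^m C(r+m, r-m) Cat(m)` in `ℚ[z]`,
where `Cat(m) = (1/(m+1)) C(2m,m)` is the Catalan number. Note `𝒞(0) = 1`. -/
noncomputable def genCatalan (r : ℕ) : Polynomial ℚ :=
  ∑ m ∈ Finset.range (r + 1),
    Polynomial.X ^ (r - m) * (1 - Polynomial.X) ^ m *
      Polynomial.C ((Nat.choose (r + m) (r - m) : ℚ) * (1 / ((m : ℚ) + 1)) *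
        (Nat.choose (2 * m) m : ℚ))

namespace PowerSeries

variable {S : Type*} [CommRing S]

theorem rescale_mk_one_mul_one_sub_C_mul_X (z : S) :
    rescale z (mk 1) * (1 - C z * X) = 1 := by
  rw [← rescale_X, ← map_one (rescale z), ← map_sub, ← map_mul, mk_one_mul_one_sub_eq_one,
    map_one]

theorem coeff_rescale_mk_one_pow (z : S) (d n : ℕ) :
    coeff n (rescale z (mk 1) ^ (d + 1)) = z ^ n * (d + n).choose d := by
  rw [← map_pow, mk_one_pow_eq_mk_choose_add, coeff_rescale, coeff_mk]

variable {R : Type*} [CommRing R] [Algebra R S]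

theorem coeff_subst_X_mul (f : R⟦X⟧) (b : S⟦X⟧) {n N : ℕ} (hn : n < N) :
    coeff n (f.subst (X * b)) = ∑ d ∈ range N, coeff d f • coeff n ((X * b) ^ d) := by
  rw [coeff_subst' (HasSubst.of_constantCoeff_zero' (by simp))]
  refine finsum_eq_sum_of_support_subset _ fun d hd => ?_
  by_contra hdN
  rw [Finset.coe_range, Set.mem_Iio, not_lt] at hdN
  rw [Function.mem_support, mul_pow, coeff_X_pow_mul', if_neg (by omega), smul_zero] at hd
  exact hd rfl

theorem coeff_mul_subst_X_mul (f : R⟦X⟧) (g b : S⟦X⟧) (n : ℕ) :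
    coeff n (g * f.subst (X * b)) =
      ∑ d ∈ range (n + 1), coeff d f • coeff n (g * (X * b) ^ d) := by
  simp_rw [coeff_mul, Finset.smul_sum]
  rw [Finset.sum_comm]
  refine Finset.sum_congr rfl fun p hp => ?_
  rw [coeff_subst_X_mul f b (Finset.Nat.antidiagonal.snd_lt hp), Finset.mul_sum]
  simp_rw [mul_smul_comm]

theorem subst_catalanSeries {a : S⟦X⟧} (ha : HasSubst a) :
    (catalanSeries.map (Nat.castRingHom S)).subst a =
      1 + a * ((catalanSeries.map (Nat.castRingHom S)).subst a) ^ 2 := by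
  have h := congrArg (map (Nat.castRingHom S)) catalanSeries_sq_mul_X_add_one
  rw [map_add, map_mul, map_pow, map_X, map_one] at h
  conv_lhs => rw [← h]
  rw [subst_add ha, subst_mul ha, subst_pow ha, subst_X ha, ← coe_substAlgHom ha, map_one]
  ring

/-- `c(t) / (1 - z u)` with `t = w u / (1 - z u)²` and `c` the Catalan series;
`rescale z (mk 1)` is `1 / (1 - z u)`. -/
noncomputable def genCatalanSeries (z w : S) : S⟦X⟧ :=
  rescale z (mk 1) * (catalanSeries.map (Nat.castRingHom S)).subst (C w * X * rescale z (mk 1) ^ 2)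

theorem one_sub_C_mul_X_mul_genCatalanSeries (z w : S) :
    (1 - C z * X) * genCatalanSeries z w = 1 + C w * X * genCatalanSeries z w ^ 2 := by
  set t := C w * X * rescale z (mk 1) ^ 2
  have hcat := subst_catalanSeries (HasSubst.of_constantCoeff_zero' (a := t) (by simp [t]))
  rw [genCatalanSeries]
  linear_combination (catalanSeries.map (Nat.castRingHom S)).subst t *
    rescale_mk_one_mul_one_sub_C_mul_X z + hcat

theorem coeff_genCatalanSeries (z w : S) (n : ℕ) :
    coeff n (genCatalanSeries z w) =
      ∑ m ∈ range (n + 1), (catalan m : S) * (z ^ (n - m) * w ^ m * (n + m).choose (2 * m)) := by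
  rw [genCatalanSeries, show C w * X * rescale z (mk 1) ^ 2 = X * (C w * rescale z (mk 1) ^ 2) by
    ring, coeff_mul_subst_X_mul]
  refine Finset.sum_congr rfl fun m hm => ?_
  have hmn : m ≤ n := Nat.lt_succ_iff.mp (Finset.mem_range.mp hm)
  rw [coeff_map, catalanSeries_coeff, smul_eq_mul, eq_natCast]
  congr 1
  rw [show rescale z (mk 1) * (X * (C w * rescale z (mk 1) ^ 2)) ^ m =
      C (w ^ m) * (X ^ m * rescale z (mk 1) ^ (2 * m + 1)) by rw [map_pow]; ring,
    coeff_C_mul, coeff_X_pow_mul', if_pos hmn, coeff_rescale_mk_one_pow]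
  rw [show 2 * m + (n - m) = n + m by omega]
  ring

end PowerSeries

theorem inv_succ_mul_centralBinom_eq_catalan (m : ℕ) :
    1 / ((m : ℚ) + 1) * (2 * m).choose m = catalan m := by
  rw [← Nat.centralBinom_eq_two_mul_choose, ← succ_mul_catalan_eq_centralBinom]
  push_cast
  field_simp

theorem mk_genCatalan :
    PowerSeries.mk genCatalan = genCatalanSeries (Polynomial.X : ℚ[X]) (1 - Polynomial.X) := by
  ext r : 1
  rw [coeff_mk, coeff_genCatalanSeries, genCatalan]
  refine Finset.sum_congr rfl fun m hm => ?_
  have hmr : m ≤ r := Nat.lt_succ_iff.mp (Finset.mem_range.mp hm)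
  rw [mul_assoc ((r + m).choose (r - m) : ℚ), inv_succ_mul_centralBinom_eq_catalan,
    Nat.choose_symm_of_eq_add (by omega : r + m = r - m + 2 * m)]
  simp only [map_mul, map_natCast]
  ring

/-- The generating function `𝐂(u) = ∑_{r≥0} 𝒞(r) uʳ` of the generalized Catalan
polynomials satisfies `𝐂(u) - 1 - z·u·𝐂(u) = (1-z)·u·𝐂(u)²` as formal power
series in `u` over `ℚ[z]`. -/
theorem genCatalan_functional_equation :
    (PowerSeries.mk fun r => genCatalan r) - 1 -
        PowerSeries.C (Polynomial.X : Polynomial ℚ) * PowerSeries.X *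
          (PowerSeries.mk fun r => genCatalan r) =
      PowerSeries.C (1 - Polynomial.X : Polynomial ℚ) * PowerSeries.X *
        (PowerSeries.mk fun r => genCatalan r) ^ 2 := by
  rw [mk_genCatalan]
  linear_combination one_sub_C_mul_X_mul_genCatalanSeries (Polynomial.X : ℚ[X]) (1 - Polynomial.X)
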